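/- arXiv:0712.4225 — 6 statements merged into one kernel-verified Lean document; each statement's English description precedes it below -/
import Mathlib

section
/- Let M be a real m_A × m_B matrix with m_A ≥ m_B, and let d ≥ m_B. Then the supremum over unit vectors a_i, b_j ∈ ℝ^d of Σ_{i,j} M_{ij} ⟨a_i, b_j⟩ equals the supremum taken with vectors in ℝ^{m_B}. -/
open scoped InnerProductSpace
open Module

/-! For fixed unit vectors `b j`, the sum is `∑ i, ⟪a i, ∑ j, M i j • b j⟫ ≤ ∑ i, ‖∑ j, M i j • b j‖`,
with equality when each `a i` is a unit vector along `∑ j, M i j • b j`. So nothing is lost by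
confining the `a i` to the span of the `b j`, which has dimension at most `m_B` and hence embeds
isometrically into `ℝ^{m_B}`; conversely `ℝ^{m_B}` embeds isometrically into `ℝ^d`. -/

theorem exists_linearIsometry_of_finrank_le {𝕜 E F : Type*} [RCLike 𝕜]
    [NormedAddCommGroup E] [InnerProductSpace 𝕜 E] [FiniteDimensional 𝕜 E]
    [NormedAddCommGroup F] [InnerProductSpace 𝕜 F] [FiniteDimensional 𝕜 F]
    (h : finrank 𝕜 E ≤ finrank 𝕜 F) : Nonempty (E →ₗᵢ[𝕜] F) := by
  let v := stdOrthonormalBasis 𝕜 E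
  let w := stdOrthonormalBasis 𝕜 F
  have hw : Orthonormal 𝕜 (w ∘ Fin.castLE h) := w.orthonormal.comp _ (Fin.castLE_injective h)
  have hv : Orthonormal 𝕜 v.toBasis := by rw [OrthonormalBasis.coe_toBasis]; exact v.orthonormal
  refine ⟨(v.toBasis.constr 𝕜 (w ∘ Fin.castLE h)).isometryOfOrthonormal hv ?_⟩
  rwa [← funext (v.toBasis.constr_basis 𝕜 (w ∘ Fin.castLE h))] at hw

theorem exists_norm_eq_one_inner_eq_norm {E : Type*} [NormedAddCommGroup E] [InnerProductSpace ℝ E]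
    [Nontrivial E] (w : E) : ∃ u : E, ‖u‖ = 1 ∧ ⟪u, w⟫_ℝ = ‖w‖ := by
  by_cases hw : w = 0
  · obtain ⟨u, hu⟩ := exists_norm_eq E zero_le_one
    exact ⟨u, hu, by simp [hw]⟩
  · refine ⟨‖w‖⁻¹ • w, norm_smul_inv_norm hw, ?_⟩
    rw [real_inner_smul_self_left]
    field_simp [norm_ne_zero_iff.2 hw]

section UnitVectorValues

variable {ι κ : Type*} [Fintype ι] [Fintype κ] (M : Matrix ι κ ℝ)
  (E : Type*) [NormedAddCommGroup E] [InnerProductSpace ℝ E]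
  {F : Type*} [NormedAddCommGroup F] [InnerProductSpace ℝ F]

def unitVectorValues : Set ℝ :=
  {x | ∃ a : ι → E, ∃ b : κ → E, (∀ i, ‖a i‖ = 1) ∧ (∀ j, ‖b j‖ = 1) ∧
    x = ∑ i, ∑ j, M i j * ⟪a i, b j⟫_ℝ}

variable {M E}

theorem unitVectorValues_subset_of_linearIsometry (f : E →ₗᵢ[ℝ] F) :
    unitVectorValues M E ⊆ unitVectorValues M F := by
  rintro x ⟨a, b, ha, hb, rfl⟩
  exact ⟨f ∘ a, f ∘ b, by simpa using ha, by simpa using hb, by simp [f.inner_map_map]⟩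

theorem sSup_unitVectorValues_of_isEmpty [IsEmpty κ] : sSup (unitVectorValues M E) = 0 := by
  have hzero : ∀ x ∈ unitVectorValues M E, x = 0 := by
    rintro x ⟨a, b, -, -, rfl⟩
    simp
  exact le_antisymm (Real.sSup_nonpos fun x hx => (hzero x hx).le)
    (Real.sSup_nonneg fun x hx => (hzero x hx).ge)

theorem sum_inner_le_sum_norm {a : ι → E} (ha : ∀ i, ‖a i‖ ≤ 1) (b : κ → E) :
    ∑ i, ∑ j, M i j * ⟪a i, b j⟫_ℝ ≤ ∑ i, ‖∑ j, M i j • b j‖ := by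
  refine Finset.sum_le_sum fun i _ => ?_
  calc ∑ j, M i j * ⟪a i, b j⟫_ℝ = ⟪a i, ∑ j, M i j • b j⟫_ℝ := by
        simp [inner_sum, real_inner_smul_right]
    _ ≤ ‖a i‖ * ‖∑ j, M i j • b j‖ := real_inner_le_norm _ _
    _ ≤ ‖∑ j, M i j • b j‖ := mul_le_of_le_one_left (norm_nonneg _) (ha i)

theorem sum_norm_mem_unitVectorValues [Nontrivial E] {b : κ → E} (hb : ∀ j, ‖b j‖ = 1) :
    ∑ i, ‖∑ j, M i j • b j‖ ∈ unitVectorValues M E := by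
  choose a ha hab using fun i => exists_norm_eq_one_inner_eq_norm (∑ j, M i j • b j)
  refine ⟨a, b, ha, hb, Finset.sum_congr rfl fun i _ => ?_⟩
  simp [← hab i, inner_sum, real_inner_smul_right]

theorem exists_le_mem_unitVectorValues [FiniteDimensional ℝ F] [Nontrivial F]
    (hκ : Fintype.card κ ≤ finrank ℝ F) {x : ℝ} (hx : x ∈ unitVectorValues M E) :
    ∃ y ∈ unitVectorValues M F, x ≤ y := by
  obtain ⟨a, b, ha, hb, rfl⟩ := hx
  let V := Submodule.span ℝ (Set.range b)
  have : FiniteDimensional ℝ V := .span_of_finite ℝ (Set.finite_range b)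
  obtain ⟨f⟩ : Nonempty (V →ₗᵢ[ℝ] F) :=
    exists_linearIsometry_of_finrank_le ((finrank_range_le_card b).trans hκ)
  let bV : κ → V := fun j => ⟨b j, Submodule.subset_span ⟨j, rfl⟩⟩
  refine ⟨_, sum_norm_mem_unitVectorValues (b := f ∘ bV) fun j => by simpa using hb j, ?_⟩
  calc ∑ i, ∑ j, M i j * ⟪a i, b j⟫_ℝ ≤ ∑ i, ‖∑ j, M i j • b j‖ :=
        sum_inner_le_sum_norm (fun i => (ha i).le) b
    _ = ∑ i, ‖∑ j, M i j • (f ∘ bV) j‖ := by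
        simp [bV, ← map_smul, ← map_sum]

end UnitVectorValues

theorem stmt4_general (mA mB d : ℕ) (hd : mB ≤ d)
    (M : Matrix (Fin mA) (Fin mB) ℝ) :
    sSup {x : ℝ | ∃ a : Fin mA → EuclideanSpace ℝ (Fin d),
        ∃ b : Fin mB → EuclideanSpace ℝ (Fin d),
        (∀ i, ‖a i‖ = 1) ∧ (∀ j, ‖b j‖ = 1) ∧
        x = ∑ i, ∑ j, M i j * ⟪a i, b j⟫_ℝ} =
    sSup {x : ℝ | ∃ a : Fin mA → EuclideanSpace ℝ (Fin mB),
        ∃ b : Fin mB → EuclideanSpace ℝ (Fin mB),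
        (∀ i, ‖a i‖ = 1) ∧ (∀ j, ‖b j‖ = 1) ∧
        x = ∑ i, ∑ j, M i j * ⟪a i, b j⟫_ℝ} := by
  show sSup (unitVectorValues M _) = sSup (unitVectorValues M _)
  rcases Nat.eq_zero_or_pos mB with rfl | hmB
  -- Both sets lie in `{0}`; the second is empty once `mA > 0`, yet both suprema are `0`.
  · rw [sSup_unitVectorValues_of_isEmpty, sSup_unitVectorValues_of_isEmpty]
  have : Nontrivial (EuclideanSpace ℝ (Fin mB)) :=
    Module.nontrivial_of_finrank_pos (R := ℝ) (by simpa using hmB)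
  obtain ⟨f⟩ : Nonempty (EuclideanSpace ℝ (Fin mB) →ₗᵢ[ℝ] EuclideanSpace ℝ (Fin d)) :=
    exists_linearIsometry_of_finrank_le (by simpa using hd)
  exact csSup_eq_csSup_of_forall_exists_le
    (fun x hx => exists_le_mem_unitVectorValues (by simp) hx)
    (fun y hy => ⟨y, unitVectorValues_subset_of_linearIsometry f hy, le_rfl⟩)

theorem stmt4 (mA mB d : ℕ) (hAB : mB ≤ mA) (hd : mB ≤ d)
    (M : Matrix (Fin mA) (Fin mB) ℝ) :
    sSup {x : ℝ | ∃ a : Fin mA → EuclideanSpace ℝ (Fin d),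
        ∃ b : Fin mB → EuclideanSpace ℝ (Fin d),
        (∀ i, ‖a i‖ = 1) ∧ (∀ j, ‖b j‖ = 1) ∧
        x = ∑ i, ∑ j, M i j * ⟪a i, b j⟫_ℝ} =
    sSup {x : ℝ | ∃ a : Fin mA → EuclideanSpace ℝ (Fin mB),
        ∃ b : Fin mB → EuclideanSpace ℝ (Fin mB),
        (∀ i, ‖a i‖ = 1) ∧ (∀ j, ‖b j‖ = 1) ∧
        x = ∑ i, ∑ j, M i j * ⟪a i, b j⟫_ℝ} :=
  stmt4_general mA mB d hd M
end

section
/- The four vertices of a regular tetrahedron inscribed in the unit sphere of ℝ³ give sum of pairwise distances 6·√(8/3) = 4√6; hence E(4,3) ≥ 4√6, and in fact for any 4 unit vectors in ℝ³, Σ_{1≤i<j≤4} ‖b_i − b_j‖ ≤ 4√6. -/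
open scoped InnerProductSpace

private lemma sum_expand (f : Fin 4 → Fin 4 → ℝ) :
    (∑ i, ∑ j ∈ Finset.Ioi i, f i j) =
    f 0 1 + f 0 2 + f 0 3 + f 1 2 + f 1 3 + f 2 3 := by
  simp [Fin.sum_univ_four, show Finset.Ioi (0:Fin 4) = {1,2,3} from by decide,
    show Finset.Ioi (1:Fin 4) = {2,3} from by decide,
    show Finset.Ioi (2:Fin 4) = {3} from by decide,
    show Finset.Ioi (3:Fin 4) = ∅ from by decide]
  ring

private lemma dist_sq (b : Fin 4 → EuclideanSpace ℝ (Fin 3)) (hb : ∀ i, ‖b i‖ = 1)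
    (i j : Fin 4) : ‖b i - b j‖ ^ 2 = 2 - 2 * ⟪b i, b j⟫_ℝ := by
  rw [norm_sub_sq_real, hb, hb]; ring

theorem stmt9 :
    (∀ u : Fin 4 → EuclideanSpace ℝ (Fin 3), (∀ i, ‖u i‖ = 1) →
      (∀ i j, i ≠ j → ⟪u i, u j⟫_ℝ = -1 / 3) →
      (∑ i, ∑ j ∈ Finset.Ioi i, ‖u i - u j‖) = 4 * Real.sqrt 6) ∧
    (∀ b : Fin 4 → EuclideanSpace ℝ (Fin 3), (∀ i, ‖b i‖ = 1) →
      (∑ i, ∑ j ∈ Finset.Ioi i, ‖b i - b j‖) ≤ 4 * Real.sqrt 6) := by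
  constructor
  · intro u hu hip
    have hd : ∀ i j : Fin 4, i ≠ j → ‖u i - u j‖ = 2 / 3 * Real.sqrt 6 := by
      intro i j hij
      have h2 : ‖u i - u j‖ ^ 2 = 8 / 3 := by
        rw [dist_sq u hu, hip i j hij]; ring
      have : ‖u i - u j‖ = Real.sqrt (8 / 3) := by
        rw [← h2, Real.sqrt_sq (norm_nonneg _)]
      rw [this, show (8/3:ℝ) = (2/3)^2 * 6 by norm_num,
        Real.sqrt_mul (by positivity), Real.sqrt_sq (by norm_num)]
    rw [sum_expand]
    rw [hd 0 1 (by decide), hd 0 2 (by decide), hd 0 3 (by decide),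
      hd 1 2 (by decide), hd 1 3 (by decide), hd 2 3 (by decide)]
    ring
  · intro b hb
    rw [sum_expand]
    set d01 := ‖b 0 - b 1‖; set d02 := ‖b 0 - b 2‖; set d03 := ‖b 0 - b 3‖
    set d12 := ‖b 1 - b 2‖; set d13 := ‖b 1 - b 3‖; set d23 := ‖b 2 - b 3‖
    have hsumsq : d01^2 + d02^2 + d03^2 + d12^2 + d13^2 + d23^2 ≤ 16 := by
      have hs : (0:ℝ) ≤ ‖b 0 + b 1 + b 2 + b 3‖ ^ 2 := by positivity
      have hexp : ‖b 0 + b 1 + b 2 + b 3‖ ^ 2 =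
          4 + 2 * (⟪b 0, b 1⟫_ℝ + ⟪b 0, b 2⟫_ℝ + ⟪b 0, b 3⟫_ℝ +
            ⟪b 1, b 2⟫_ℝ + ⟪b 1, b 3⟫_ℝ + ⟪b 2, b 3⟫_ℝ) := by
        rw [← real_inner_self_eq_norm_sq]
        simp only [inner_add_left, inner_add_right, real_inner_self_eq_norm_sq, hb]
        rw [real_inner_comm (b 1) (b 0), real_inner_comm (b 2) (b 0),
          real_inner_comm (b 3) (b 0), real_inner_comm (b 2) (b 1),
          real_inner_comm (b 3) (b 1), real_inner_comm (b 3) (b 2)]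
        ring
      have e01 := dist_sq b hb 0 1; have e02 := dist_sq b hb 0 2
      have e03 := dist_sq b hb 0 3; have e12 := dist_sq b hb 1 2
      have e13 := dist_sq b hb 1 3; have e23 := dist_sq b hb 2 3
      rw [hexp] at hs
      simp only [d01, d02, d03, d12, d13, d23]
      linarith
    have hsq : (d01 + d02 + d03 + d12 + d13 + d23) ^ 2 ≤ 96 := by
      nlinarith [sq_nonneg (d01 - d02), sq_nonneg (d01 - d03), sq_nonneg (d01 - d12),
        sq_nonneg (d01 - d13), sq_nonneg (d01 - d23), sq_nonneg (d02 - d03),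
        sq_nonneg (d02 - d12), sq_nonneg (d02 - d13), sq_nonneg (d02 - d23),
        sq_nonneg (d03 - d12), sq_nonneg (d03 - d13), sq_nonneg (d03 - d23),
        sq_nonneg (d12 - d13), sq_nonneg (d12 - d23), sq_nonneg (d13 - d23)]
    have h96 : (4 * Real.sqrt 6) ^ 2 = 96 := by
      rw [mul_pow, Real.sq_sqrt (by norm_num : (0:ℝ) ≤ 6)]; norm_num
    nlinarith [norm_nonneg (b 0 - b 1), norm_nonneg (b 0 - b 2), norm_nonneg (b 0 - b 3),
      norm_nonneg (b 1 - b 2), norm_nonneg (b 1 - b 3), norm_nonneg (b 2 - b 3),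
      Real.sqrt_nonneg 6]
end

section
/- Let γ_1,…,γ_n be d×d Hermitian matrices satisfying γ_iγ_j + γ_jγ_i = 2δ_{ij}𝟙 and Tr(γ_i) = 0, with Tr(γ_iγ_j) = d·δ_{ij}. Let a, b ∈ ℝ^n be unit vectors and set A = Σ_k a_k γ_k, B = Σ_k b_k γ_kᵗ. Then A² = 𝟙, B² = 𝟙, and for the maximally entangled state |Φ⁺⟩ = (1/√d) Σ_{i=1}^d |ii⟩ in ℂ^d ⊗ ℂ^d, one has ⟨Φ⁺| A ⊗ B |Φ⁺⟩ = ⟨a, b⟩ (the Euclidean dot product), and ⟨Φ⁺| A ⊗ 𝟙 |Φ⁺⟩ = ⟨Φ⁺| 𝟙 ⊗ B |Φ⁺⟩ = 0. -/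
/-!
Squaring `∑ c_k M_k` and symmetrising the double sum turns every product `M_k M_l` into the
anticommutator `M_k M_l + M_l M_k = 2 δ_kl`, so the square is `‖c‖² = 1`; the transposed family
anticommutes as well, which gives `B² = 1`. On a diagonal vector `Φ = s ∑_i |ii⟩` one has
`⟨Φ, (X ⊗ Y) Φ⟩ = |s|² Tr(X Yᵀ)`, and with `s = 1/√d` the expectations reduce to traces:
`Tr(A Bᵀ) = d ⟨a, b⟩` by trace orthogonality, while `A` and `Bᵀ` are traceless.
-/

open Matrix
open Kronecker
open scoped InnerProductSpace

section Anticommuting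

variable {ι 𝕜 R : Type*} [Fintype ι] [DecidableEq ι] [Field 𝕜] [NeZero (2 : 𝕜)]
  [Ring R] [Algebra 𝕜 R]

theorem sum_smul_sq_of_anticomm (M : ι → R)
    (hM : ∀ i j, M i * M j + M j * M i = if i = j then (2 : 𝕜) • (1 : R) else 0) (c : ι → 𝕜) :
    (∑ k, c k • M k) ^ 2 = (∑ k, c k ^ 2) • (1 : R) := by
  set X := ∑ k, c k • M k
  have hXX : X * X = ∑ k, ∑ l, (c k * c l) • (M k * M l) := by
    simp only [X, Finset.sum_mul_sum, smul_mul_smul_comm]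
  have hXX' : X * X = ∑ k, ∑ l, (c k * c l) • (M l * M k) := by
    rw [hXX, Finset.sum_comm]
    exact Finset.sum_congr rfl fun k _ => Finset.sum_congr rfl fun l _ => by rw [mul_comm (c l)]
  have h2X : (2 : 𝕜) • X ^ 2 = (2 : 𝕜) • (∑ k, c k ^ 2) • (1 : R) :=
    calc (2 : 𝕜) • X ^ 2 = ∑ k, ∑ l, (c k * c l) • (M k * M l + M l * M k) := by
          rw [two_smul, sq]
          nth_rewrite 1 [hXX]
          rw [hXX']
          simp only [← Finset.sum_add_distrib, ← smul_add]
      _ = (2 : 𝕜) • (∑ k, c k ^ 2) • (1 : R) := by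
          simp only [hM, smul_ite, smul_zero, Finset.sum_ite_eq, Finset.mem_univ, if_true,
            smul_smul, ← Finset.sum_smul, Finset.sum_mul, sq, mul_comm (2 : 𝕜)]
  exact smul_right_injective R two_ne_zero h2X

end Anticommuting

theorem transpose_anticomm {ι m α : Type*} [Fintype m] [DecidableEq m] [DecidableEq ι]
    [CommRing α] (M : ι → Matrix m m α)
    (hM : ∀ i j, M i * M j + M j * M i = if i = j then (2 : α) • (1 : Matrix m m α) else 0)
    (i j : ι) :
    (M i)ᵀ * (M j)ᵀ + (M j)ᵀ * (M i)ᵀ = if i = j then (2 : α) • (1 : Matrix m m α) else 0 := by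
  rw [← transpose_mul, ← transpose_mul, ← transpose_add, hM j i]
  split_ifs <;> simp_all [eq_comm]

theorem trace_sum_smul_mul_sum_smul {ι m α : Type*} [Fintype ι] [DecidableEq ι] [Fintype m]
    [CommSemiring α] (M : ι → Matrix m m α) (t : α)
    (hM : ∀ i j, (M i * M j).trace = if i = j then t else 0) (a b : ι → α) :
    ((∑ k, a k • M k) * ∑ k, b k • M k).trace = t * ∑ k, a k * b k := by
  rw [Finset.sum_mul_sum]
  simp [smul_mul_smul_comm, trace_sum, hM, Finset.mul_sum, mul_comm]

theorem inner_toEuclideanLin_kronecker_of_diag {𝕜 m : Type*} [RCLike 𝕜] [Fintype m]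
    [DecidableEq m] (X Y : Matrix m m 𝕜) (s : 𝕜) (Φ : EuclideanSpace 𝕜 (m × m))
    (hΦ : ∀ p : m × m, Φ p = if p.1 = p.2 then s else 0) :
    ⟪Φ, toEuclideanLin (X ⊗ₖ Y) Φ⟫_𝕜 = (starRingEnd 𝕜 s * s) * (X * Yᵀ).trace := by
  simp only [toLpLin_apply, PiLp.inner_apply, hΦ, mulVec, dotProduct, kroneckerMap_apply,
    mul_ite, mul_zero, Fintype.sum_prod_type, Finset.sum_ite_eq, Finset.mem_univ, if_true,
    RCLike.inner_apply, trace, diag_apply, mul_apply, transpose_apply, Finset.mul_sum]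
  refine Finset.sum_congr rfl fun i _ => ?_
  simp only [apply_ite (starRingEnd 𝕜), map_zero, mul_ite, mul_zero, Finset.sum_ite_eq,
    Finset.mem_univ, if_true, Finset.sum_mul]
  exact Finset.sum_congr rfl fun j _ => by ring

theorem stmt16_general (d n : ℕ) (hd : 1 ≤ d)
    (γ : Fin n → Matrix (Fin d) (Fin d) ℂ)
    (hCliff : ∀ i j, γ i * γ j + γ j * γ i =
      if i = j then (2 : ℂ) • (1 : Matrix (Fin d) (Fin d) ℂ) else 0)
    (hTr0 : ∀ i, (γ i).trace = 0)
    (hTr : ∀ i j, (γ i * γ j).trace = if i = j then (d : ℂ) else 0)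
    (a b : Fin n → ℝ) (ha : ∑ k, a k ^ 2 = 1) (hb : ∑ k, b k ^ 2 = 1)
    (A B : Matrix (Fin d) (Fin d) ℂ)
    (hA : A = ∑ k, (a k : ℂ) • γ k) (hB : B = ∑ k, (b k : ℂ) • (γ k)ᵀ)
    (Φ : EuclideanSpace ℂ (Fin d × Fin d))
    (hΦ : ∀ p : Fin d × Fin d, Φ p = if p.1 = p.2 then (1 / Real.sqrt d : ℂ) else 0) :
    A ^ 2 = 1 ∧ B ^ 2 = 1 ∧
    ⟪Φ, Matrix.toEuclideanLin (A ⊗ₖ B) Φ⟫_ℂ = ((∑ k, a k * b k : ℝ) : ℂ) ∧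
    ⟪Φ, Matrix.toEuclideanLin (A ⊗ₖ (1 : Matrix (Fin d) (Fin d) ℂ)) Φ⟫_ℂ = 0 ∧
    ⟪Φ, Matrix.toEuclideanLin ((1 : Matrix (Fin d) (Fin d) ℂ) ⊗ₖ B) Φ⟫_ℂ = 0 := by
  have hd0 : (d : ℂ) ≠ 0 := by exact_mod_cast (Nat.one_le_iff_ne_zero.mp hd)
  have hΦ_sq : starRingEnd ℂ (1 / Real.sqrt d : ℂ) * (1 / Real.sqrt d : ℂ) = 1 / d := by
    rw [map_div₀, map_one, Complex.conj_ofReal, div_mul_div_comm, one_mul, ← Complex.ofReal_mul,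
      Real.mul_self_sqrt (Nat.cast_nonneg d), Complex.ofReal_natCast]
  have hexp : ∀ X Y : Matrix (Fin d) (Fin d) ℂ,
      ⟪Φ, toEuclideanLin (X ⊗ₖ Y) Φ⟫_ℂ = (X * Yᵀ).trace / d := fun X Y => by
    rw [inner_toEuclideanLin_kronecker_of_diag X Y _ Φ hΦ, hΦ_sq, one_div_mul_eq_div]
  have hBt : Bᵀ = ∑ k, (b k : ℂ) • γ k := by simp [hB, transpose_sum]
  have htrace : ∀ c : Fin n → ℝ, (∑ k, (c k : ℂ) • γ k).trace = 0 := by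
    simp [trace_sum, hTr0]
  have hunit : ∀ c : Fin n → ℝ, ∑ k, c k ^ 2 = 1 → ∑ k, (c k : ℂ) ^ 2 = 1 := fun c hc => by
    exact_mod_cast hc
  refine ⟨?_, ?_, ?_, ?_, ?_⟩
  · rw [hA, sum_smul_sq_of_anticomm γ hCliff, hunit a ha, one_smul]
  · rw [hB, sum_smul_sq_of_anticomm _ (transpose_anticomm γ hCliff), hunit b hb, one_smul]
  · rw [hexp, hBt, hA, trace_sum_smul_mul_sum_smul γ _ hTr]
    push_cast
    field_simp
  · rw [hexp, transpose_one, mul_one, hA, htrace, zero_div]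
  · rw [hexp, one_mul, hBt, htrace, zero_div]

theorem stmt16 (d n : ℕ) (hd : 1 ≤ d)
    (γ : Fin n → Matrix (Fin d) (Fin d) ℂ)
    (hHerm : ∀ i, (γ i).IsHermitian)
    (hCliff : ∀ i j, γ i * γ j + γ j * γ i =
      if i = j then (2 : ℂ) • (1 : Matrix (Fin d) (Fin d) ℂ) else 0)
    (hTr0 : ∀ i, (γ i).trace = 0)
    (hTr : ∀ i j, (γ i * γ j).trace = if i = j then (d : ℂ) else 0)
    (a b : Fin n → ℝ) (ha : ∑ k, a k ^ 2 = 1) (hb : ∑ k, b k ^ 2 = 1)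
    (A B : Matrix (Fin d) (Fin d) ℂ)
    (hA : A = ∑ k, (a k : ℂ) • γ k) (hB : B = ∑ k, (b k : ℂ) • (γ k)ᵀ)
    (Φ : EuclideanSpace ℂ (Fin d × Fin d))
    (hΦ : ∀ p : Fin d × Fin d, Φ p = if p.1 = p.2 then (1 / Real.sqrt d : ℂ) else 0) :
    A ^ 2 = 1 ∧ B ^ 2 = 1 ∧
    ⟪Φ, Matrix.toEuclideanLin (A ⊗ₖ B) Φ⟫_ℂ = ((∑ k, a k * b k : ℝ) : ℂ) ∧
    ⟪Φ, Matrix.toEuclideanLin (A ⊗ₖ (1 : Matrix (Fin d) (Fin d) ℂ)) Φ⟫_ℂ = 0 ∧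
    ⟪Φ, Matrix.toEuclideanLin ((1 : Matrix (Fin d) (Fin d) ℂ) ⊗ₖ B) Φ⟫_ℂ = 0 :=
  stmt16_general d n hd γ hCliff hTr0 hTr a b ha hb A B hA hB Φ hΦ
end

section
/- Let |ψ⟩ be a unit vector in ℂ^D ⊗ ℂ^D, and let A_1,…,A_{m_A}, B_1,…,B_{m_B} be Hermitian D×D matrices with A_i² = 𝟙 and B_j² = 𝟙. Then there exist real unit vectors a_1,…,a_{m_A} and b_1,…,b_{m_B} in ℝ^{2D²} such that ⟨ψ| A_i ⊗ B_j |ψ⟩ = ⟨a_i, b_j⟩ for all i, j. -/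
/-!
Put `aᵢ = (Aᵢ ⊗ 1) ψ` and `bⱼ = (1 ⊗ Bⱼ) ψ`. A Hermitian involution is unitary, so these are unit
vectors, and `⟪aᵢ, bⱼ⟫ = ⟪ψ, (Aᵢ ⊗ Bⱼ) ψ⟫`, which is real because `Aᵢ ⊗ Bⱼ` is Hermitian. The real
part of the inner product of a `D²`-dimensional complex space is the inner product of a
`2D²`-dimensional real one, so realifying keeps these values.
-/

open Matrix
open Kronecker
open scoped InnerProductSpace

theorem exists_realification (E : Type*) [NormedAddCommGroup E] [InnerProductSpace ℂ E]
    [FiniteDimensional ℂ E] {n : ℕ} (hn : Module.finrank ℂ E = n) :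
    ∃ f : E → EuclideanSpace ℝ (Fin (2 * n)),
      (∀ u, ‖f u‖ = ‖u‖) ∧ ∀ u v, ⟪f u, f v⟫_ℝ = (⟪u, v⟫_ℂ).re := by
  let _ : InnerProductSpace ℝ E := InnerProductSpace.complexToReal
  have hdim : Module.finrank ℝ E = 2 * n := by rw [finrank_real_of_complex, hn]
  let e := ((stdOrthonormalBasis ℝ E).reindex (finCongr hdim)).repr
  exact ⟨e, e.norm_map, fun u v => (e.inner_map_map u v).trans (real_inner_eq_re_inner ℂ u v)⟩

namespace Matrix

variable {𝕜 l m n : Type*} [RCLike 𝕜]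

theorem inner_toEuclideanLin_toEuclideanLin [Fintype l] [Fintype m] [Fintype n] [DecidableEq l]
    [DecidableEq m] [DecidableEq n] (M : Matrix l m 𝕜) (N : Matrix l n 𝕜)
    (x : EuclideanSpace 𝕜 m) (y : EuclideanSpace 𝕜 n) :
    ⟪M.toEuclideanLin x, N.toEuclideanLin y⟫_𝕜 = ⟪x, (Mᴴ * N).toEuclideanLin y⟫_𝕜 := by
  rw [toLpLin_mul (q := 2), LinearMap.comp_apply, toEuclideanLin_conjTranspose_eq_adjoint,
    LinearMap.adjoint_inner_right]

theorem norm_toEuclideanLin_of_mem_unitary [Fintype n] [DecidableEq n] {U : Matrix n n 𝕜}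
    (hU : U ∈ unitary (Matrix n n 𝕜)) (x : EuclideanSpace 𝕜 n) :
    ‖U.toEuclideanLin x‖ = ‖x‖ := by
  rw [norm_eq_sqrt_re_inner (𝕜 := 𝕜), inner_toEuclideanLin_toEuclideanLin,
    ← star_eq_conjTranspose, Unitary.star_mul_self_of_mem hU, toLpLin_one, LinearMap.id_apply,
    norm_eq_sqrt_re_inner (𝕜 := 𝕜)]

theorem IsHermitian.mem_unitary_of_sq_eq_one [Fintype n] [DecidableEq n] {A : Matrix n n 𝕜}
    (hA : A.IsHermitian) (h : A ^ 2 = 1) : A ∈ unitary (Matrix n n 𝕜) := by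
  rw [Unitary.mem_iff, star_eq_conjTranspose, hA.eq, ← sq, h]
  exact ⟨rfl, rfl⟩

theorem IsHermitian.kronecker {A : Matrix m m 𝕜} {B : Matrix n n 𝕜} (hA : A.IsHermitian)
    (hB : B.IsHermitian) : (A ⊗ₖ B).IsHermitian := by
  rw [IsHermitian, conjTranspose_kronecker, hA.eq, hB.eq]

theorem IsHermitian.conjTranspose_kronecker_one_mul_one_kronecker [Fintype m] [Fintype n]
    [DecidableEq m] [DecidableEq n]
    {A : Matrix m m 𝕜} (hA : A.IsHermitian) (B : Matrix n n 𝕜) :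
    (A ⊗ₖ (1 : Matrix n n 𝕜))ᴴ * ((1 : Matrix m m 𝕜) ⊗ₖ B) = A ⊗ₖ B := by
  rw [conjTranspose_kronecker, hA.eq, conjTranspose_one, ← mul_kronecker_mul, mul_one, one_mul]

end Matrix

theorem stmt17 (D mA mB : ℕ)
    (ψ : EuclideanSpace ℂ (Fin D × Fin D)) (hψ : ‖ψ‖ = 1)
    (A : Fin mA → Matrix (Fin D) (Fin D) ℂ) (B : Fin mB → Matrix (Fin D) (Fin D) ℂ)
    (hAHerm : ∀ i, (A i).IsHermitian) (hBHerm : ∀ j, (B j).IsHermitian)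
    (hA : ∀ i, A i ^ 2 = 1) (hB : ∀ j, B j ^ 2 = 1) :
    ∃ a : Fin mA → EuclideanSpace ℝ (Fin (2 * D ^ 2)),
    ∃ b : Fin mB → EuclideanSpace ℝ (Fin (2 * D ^ 2)),
      (∀ i, ‖a i‖ = 1) ∧ (∀ j, ‖b j‖ = 1) ∧
      ∀ i j, ⟪ψ, Matrix.toEuclideanLin (A i ⊗ₖ B j) ψ⟫_ℂ = ((⟪a i, b j⟫_ℝ : ℝ) : ℂ) := by
  obtain ⟨f, hf_norm, hf_inner⟩ :=
    exists_realification (EuclideanSpace ℂ (Fin D × Fin D)) (n := D ^ 2) (by simp [sq])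
  have hAU : ∀ i, A i ∈ unitary _ := fun i => (hAHerm i).mem_unitary_of_sq_eq_one (hA i)
  have hBU : ∀ j, B j ∈ unitary _ := fun j => (hBHerm j).mem_unitary_of_sq_eq_one (hB j)
  refine ⟨fun i => f ((A i ⊗ₖ 1).toEuclideanLin ψ), fun j => f ((1 ⊗ₖ B j).toEuclideanLin ψ),
    fun i => ?_, fun j => ?_, fun i j => ?_⟩
  · rw [hf_norm, norm_toEuclideanLin_of_mem_unitary (kronecker_mem_unitary (hAU i) (one_mem _)),
      hψ]
  · rw [hf_norm, norm_toEuclideanLin_of_mem_unitary (kronecker_mem_unitary (one_mem _) (hBU j)),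
      hψ]
  · rw [hf_inner, inner_toEuclideanLin_toEuclideanLin,
      (hAHerm i).conjTranspose_kronecker_one_mul_one_kronecker]
    exact (isSymmetric_toEuclideanLin_iff.mpr ((hAHerm i).kronecker (hBHerm j))
      |>.coe_re_inner_self_apply ψ).symm
end

section
/- Let M be a real m_A × m_B matrix, |ψ⟩ a unit vector in ℂ² ⊗ ℂ², and A_i = a_i·σ ⊗ 𝟙, B_j = 𝟙 ⊗ (b_j·σᵗ) with unit vectors a_i, b_j ∈ ℝ³. Then Σ_{i,j} M_{ij} ⟨ψ| A_i B_j |ψ⟩ ≤ Σ_{i=1}^{m_A} ‖Σ_{j=1}^{m_B} M_{ij} b_j‖, where the norm on the right is the Euclidean norm in ℝ³. -/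
/-!
For a fixed row `i`, the correlator `b ↦ Re ⟨ψ| A_i (𝟙 ⊗ (b·σ)ᵀ) |ψ⟩` is real-linear in `b`, so the
row sum equals the correlator at `v = Σ_j M_ij b_j`. Since `A_i` is Hermitian, this correlator is
`Re ⟨A_i ψ, (𝟙 ⊗ (v·σ)ᵀ) ψ⟩`, and Cauchy–Schwarz bounds it by `‖A_i ψ‖ · ‖(𝟙 ⊗ (v·σ)ᵀ) ψ‖ = ‖v‖`:
both operators are Hermitian and square to a multiple of the identity, `(v·σ)² = ‖v‖² 𝟙`.
-/

open Matrix
open Kronecker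
open scoped InnerProductSpace

noncomputable def pauliX : Matrix (Fin 2) (Fin 2) ℂ := !![0, 1; 1, 0]
noncomputable def pauliY : Matrix (Fin 2) (Fin 2) ℂ := !![0, -Complex.I; Complex.I, 0]
noncomputable def pauliZ : Matrix (Fin 2) (Fin 2) ℂ := !![1, 0; 0, -1]

/-- `v ⬝ σ` for `v ∈ ℝ³`. -/
noncomputable def dotPauli (v : EuclideanSpace ℝ (Fin 3)) : Matrix (Fin 2) (Fin 2) ℂ :=
  (v 0 : ℂ) • pauliX + (v 1 : ℂ) • pauliY + (v 2 : ℂ) • pauliZ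

section EuclideanMatrix

variable {𝕜 n : Type*} [RCLike 𝕜] [Fintype n] [DecidableEq n]

theorem Matrix.inner_toEuclideanLin_mul {A : Matrix n n 𝕜} (hA : A.IsHermitian) (B : Matrix n n 𝕜)
    (ψ : EuclideanSpace 𝕜 n) :
    ⟪ψ, toEuclideanLin (A * B) ψ⟫_𝕜 = ⟪toEuclideanLin A ψ, toEuclideanLin B ψ⟫_𝕜 := by
  rw [toLpLin_mul_same, LinearMap.comp_apply, ← isSymmetric_toEuclideanLin_iff.2 hA]

theorem Matrix.re_inner_toEuclideanLin_mul_le {A : Matrix n n 𝕜} (hA : A.IsHermitian)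
    (B : Matrix n n 𝕜) (ψ : EuclideanSpace 𝕜 n) :
    RCLike.re ⟪ψ, toEuclideanLin (A * B) ψ⟫_𝕜 ≤ ‖toEuclideanLin A ψ‖ * ‖toEuclideanLin B ψ‖ := by
  rw [inner_toEuclideanLin_mul hA]
  exact re_inner_le_norm _ _

theorem Matrix.norm_toEuclideanLin_of_conjTranspose_mul_self {A : Matrix n n 𝕜} {r : ℝ}
    (hr : 0 ≤ r) (hA : Aᴴ * A = r ^ 2 • (1 : Matrix n n 𝕜)) (ψ : EuclideanSpace 𝕜 n) :
    ‖toEuclideanLin A ψ‖ = r * ‖ψ‖ := by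
  have h : ‖toEuclideanLin A ψ‖ ^ 2 = (r * ‖ψ‖) ^ 2 := by
    rw [@norm_sq_eq_re_inner 𝕜, ← LinearMap.adjoint_inner_right,
      ← toEuclideanLin_conjTranspose_eq_adjoint, ← LinearMap.comp_apply, ← toLpLin_mul_same, hA,
      RCLike.real_smul_eq_coe_smul (K := 𝕜), map_smul, toLpLin_one, LinearMap.smul_apply,
      LinearMap.id_apply, inner_smul_right, RCLike.re_ofReal_mul, ← @norm_sq_eq_re_inner 𝕜, mul_pow]
  exact (pow_left_inj₀ (norm_nonneg _) (by positivity) two_ne_zero).1 h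

end EuclideanMatrix

theorem Matrix.IsHermitian.kronecker_s18 {α m n : Type*} [CommMagma α] [StarMul α] {A : Matrix m m α}
    {B : Matrix n n α} (hA : A.IsHermitian) (hB : B.IsHermitian) : (A ⊗ₖ B).IsHermitian := by
  rw [IsHermitian, conjTranspose_kronecker, hA.eq, hB.eq]

theorem dotPauli_isHermitian (v : EuclideanSpace ℝ (Fin 3)) : (dotPauli v).IsHermitian := by
  ext i j
  fin_cases i <;> fin_cases j <;>
    simp [dotPauli, pauliX, pauliY, pauliZ, conjTranspose_apply]

theorem dotPauli_mul_self (v : EuclideanSpace ℝ (Fin 3)) :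
    dotPauli v * dotPauli v = ‖v‖ ^ 2 • (1 : Matrix (Fin 2) (Fin 2) ℂ) := by
  rw [EuclideanSpace.real_norm_sq_eq, Fin.sum_univ_three, ← Complex.coe_smul]
  ext i j
  fin_cases i <;> fin_cases j <;>
    simp [dotPauli, pauliX, pauliY, pauliZ, mul_apply, Fin.sum_univ_two] <;> ring_nf <;> simp

noncomputable def dotPauliLinearMap : EuclideanSpace ℝ (Fin 3) →ₗ[ℝ] Matrix (Fin 2) (Fin 2) ℂ where
  toFun := dotPauli
  map_add' v w := by
    simp only [dotPauli, PiLp.add_apply, Complex.ofReal_add, add_smul]; abel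
  map_smul' c v := by
    simp only [dotPauli, PiLp.smul_apply, smul_eq_mul, Complex.ofReal_mul, mul_smul, smul_add,
      RingHom.id_apply, Complex.coe_smul]

theorem norm_toEuclideanLin_dotPauli_kronecker_one (v : EuclideanSpace ℝ (Fin 3))
    (ψ : EuclideanSpace ℂ (Fin 2 × Fin 2)) :
    ‖toEuclideanLin (dotPauli v ⊗ₖ (1 : Matrix (Fin 2) (Fin 2) ℂ)) ψ‖ = ‖v‖ * ‖ψ‖ := by
  refine norm_toEuclideanLin_of_conjTranspose_mul_self (norm_nonneg v) ?_ ψ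
  rw [((dotPauli_isHermitian v).kronecker_s18 isHermitian_one).eq, ← mul_kronecker_mul,
    dotPauli_mul_self, mul_one, smul_kronecker, one_kronecker_one]

theorem norm_toEuclideanLin_one_kronecker_dotPauli_transpose (v : EuclideanSpace ℝ (Fin 3))
    (ψ : EuclideanSpace ℂ (Fin 2 × Fin 2)) :
    ‖toEuclideanLin ((1 : Matrix (Fin 2) (Fin 2) ℂ) ⊗ₖ (dotPauli v)ᵀ) ψ‖ = ‖v‖ * ‖ψ‖ := by
  refine norm_toEuclideanLin_of_conjTranspose_mul_self (norm_nonneg v) ?_ ψ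
  rw [conjTranspose_kronecker, conjTranspose_one, (dotPauli_isHermitian v).transpose.eq,
    ← mul_kronecker_mul, one_mul, ← transpose_mul, dotPauli_mul_self,
    transpose_smul, transpose_one, kronecker_smul, one_kronecker_one]

noncomputable def correlator (A : Matrix (Fin 2 × Fin 2) (Fin 2 × Fin 2) ℂ)
    (ψ : EuclideanSpace ℂ (Fin 2 × Fin 2)) : EuclideanSpace ℝ (Fin 3) →ₗ[ℝ] ℝ where
  toFun b :=
    (⟪ψ, toEuclideanLin (A * ((1 : Matrix (Fin 2) (Fin 2) ℂ) ⊗ₖ (dotPauliLinearMap b)ᵀ)) ψ⟫_ℂ).re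
  map_add' b c := by
    simp only [map_add, transpose_add, kronecker_add, mul_add,
      LinearMap.add_apply, inner_add_right, Complex.add_re]
  map_smul' r b := by
    simp only [map_smul, transpose_smul, kronecker_smul, mul_smul_comm,
      ← Complex.coe_smul, LinearMap.smul_apply, inner_smul_right, Complex.re_ofReal_mul,
      RingHom.id_apply, smul_eq_mul]

theorem stmt18_general (mA mB : ℕ) (M : Matrix (Fin mA) (Fin mB) ℝ)
    (ψ : EuclideanSpace ℂ (Fin 2 × Fin 2)) (hψ : ‖ψ‖ = 1)
    (a : Fin mA → EuclideanSpace ℝ (Fin 3)) (b : Fin mB → EuclideanSpace ℝ (Fin 3))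
    (ha : ∀ i, ‖a i‖ = 1) :
    (∑ i, ∑ j, M i j *
        (⟪ψ, Matrix.toEuclideanLin
            ((dotPauli (a i) ⊗ₖ (1 : Matrix (Fin 2) (Fin 2) ℂ)) *
             ((1 : Matrix (Fin 2) (Fin 2) ℂ) ⊗ₖ (dotPauli (b j))ᵀ)) ψ⟫_ℂ).re) ≤
      ∑ i, ‖∑ j, M i j • b j‖ := by
  refine Finset.sum_le_sum fun i _ => ?_
  set v := ∑ j, M i j • b j
  calc ∑ j, M i j * correlator (dotPauli (a i) ⊗ₖ 1) ψ (b j)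
      = correlator (dotPauli (a i) ⊗ₖ 1) ψ v := by
        simp only [v, map_sum, map_smul, smul_eq_mul]
    _ ≤ ‖toEuclideanLin (dotPauli (a i) ⊗ₖ (1 : Matrix (Fin 2) (Fin 2) ℂ)) ψ‖ *
          ‖toEuclideanLin ((1 : Matrix (Fin 2) (Fin 2) ℂ) ⊗ₖ (dotPauli v)ᵀ) ψ‖ :=
        re_inner_toEuclideanLin_mul_le ((dotPauli_isHermitian _).kronecker_s18 isHermitian_one) _ ψ
    _ = ‖v‖ := by
        rw [norm_toEuclideanLin_dotPauli_kronecker_one,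
          norm_toEuclideanLin_one_kronecker_dotPauli_transpose, ha i, hψ]
        ring

theorem stmt18 (mA mB : ℕ) (M : Matrix (Fin mA) (Fin mB) ℝ)
    (ψ : EuclideanSpace ℂ (Fin 2 × Fin 2)) (hψ : ‖ψ‖ = 1)
    (a : Fin mA → EuclideanSpace ℝ (Fin 3)) (b : Fin mB → EuclideanSpace ℝ (Fin 3))
    (ha : ∀ i, ‖a i‖ = 1) (hb : ∀ j, ‖b j‖ = 1) :
    (∑ i, ∑ j, M i j *
        (⟪ψ, Matrix.toEuclideanLin
            ((dotPauli (a i) ⊗ₖ (1 : Matrix (Fin 2) (Fin 2) ℂ)) *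
             ((1 : Matrix (Fin 2) (Fin 2) ℂ) ⊗ₖ (dotPauli (b j))ᵀ)) ψ⟫_ℂ).re) ≤
      ∑ i, ‖∑ j, M i j • b j‖ :=
  stmt18_general mA mB M ψ hψ a b ha
end

section
/- For the four standard basis vectors e_1, e_2, e_3, e_4 of ℝ⁴, Σ_{k_1,k_2,k_3 ∈ {0,1}} ‖(−1)^{k_1} e_1 + (−1)^{k_2} e_2 + (−1)^{k_3} e_3 + e_4‖ = 16. Moreover, for any unit vectors b_1, b_2, b_3, b_4 in ℝ⁴, Σ_{k_1,k_2,k_3 ∈ {0,1}} ‖(−1)^{k_1} b_1 + (−1)^{k_2} b_2 + (−1)^{k_3} b_3 + b_4‖ ≤ 16. -/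
/-!
Each of the eight vectors `±b₁ ± b₂ ± b₃ + b₄` has norm `2` when the `bⱼ` are the standard basis.
For arbitrary unit vectors, applying the parallelogram law to one sign at a time shows that the
squared norms of the eight vectors always sum to `8 · Σ ‖bⱼ‖² = 32`, so by Cauchy–Schwarz the
norms sum to at most `√(8 · 32) = 16`.
-/

open Finset

section

variable {E : Type*} [NormedAddCommGroup E] [InnerProductSpace ℝ E]

def signedSum (b : Fin 4 → E) (s : Fin 2 × Fin 2 × Fin 2) : E :=
  (-1 : ℝ) ^ (s.1 : ℕ) • b 0 + (-1 : ℝ) ^ (s.2.1 : ℕ) • b 1 + (-1 : ℝ) ^ (s.2.2 : ℕ) • b 2 + b 3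

theorem sum_fin_two_norm_add_neg_one_pow_smul_sq (y x : E) :
    ∑ k : Fin 2, ‖y + (-1 : ℝ) ^ (k : ℕ) • x‖ ^ 2 = 2 * (‖y‖ ^ 2 + ‖x‖ ^ 2) := by
  simpa [Fin.sum_univ_two, ← sub_eq_add_neg] using parallelogram_law_with_norm ℝ y x

theorem sum_norm_signedSum_sq (b : Fin 4 → E) :
    ∑ s, ‖signedSum b s‖ ^ 2 = 8 * ∑ j, ‖b j‖ ^ 2 := by
  -- bring each signed term to the end, where the parallelogram lemma removes its sign
  simp only [signedSum, Fintype.sum_prod_type, add_right_comm _ (_ • b 2) (b 3),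
    sum_fin_two_norm_add_neg_one_pow_smul_sq, mul_add, sum_add_distrib, ← mul_sum,
    add_right_comm _ (_ • b 1) (b 3), add_comm ((-1 : ℝ) ^ _ • b 0) (b 3)]
  simp [Fin.sum_univ_four]
  ring

theorem sum_norm_signedSum_le_sixteen (b : Fin 4 → E) (hb : ∀ j, ‖b j‖ = 1) :
    ∑ s, ‖signedSum b s‖ ≤ 16 := by
  have hsq : ∑ s, ‖signedSum b s‖ ^ 2 = 32 := by norm_num [sum_norm_signedSum_sq, hb]
  have hcs : (∑ s, ‖signedSum b s‖) ^ 2 ≤ 8 * ∑ s, ‖signedSum b s‖ ^ 2 := by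
    simpa [Fintype.card_prod] using sq_sum_le_card_mul_sum_sq (s := univ) (f := (‖signedSum b ·‖))
  calc ∑ s, ‖signedSum b s‖ ≤ √(8 * ∑ s, ‖signedSum b s‖ ^ 2) := Real.le_sqrt_of_sq_le hcs
    _ = 16 := by rw [hsq, show (8 : ℝ) * 32 = 16 ^ 2 by norm_num, Real.sqrt_sq (by norm_num)]

end

theorem EuclideanSpace.norm_eq_sqrt_card_of_sq_eq_one {ι : Type*} [Fintype ι]
    (x : EuclideanSpace ℝ ι) (hx : ∀ i, x i ^ 2 = 1) : ‖x‖ = √(Fintype.card ι) := by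
  simp [EuclideanSpace.norm_eq, hx]

theorem norm_signedSum_single_eq_two (s : Fin 2 × Fin 2 × Fin 2) :
    ‖signedSum (fun j : Fin 4 => EuclideanSpace.single j (1 : ℝ)) s‖ = 2 := by
  rw [EuclideanSpace.norm_eq_sqrt_card_of_sq_eq_one _ fun i => by
    fin_cases i <;> simp [signedSum, ← pow_mul]]
  simp [show (4 : ℝ) = 2 ^ 2 by norm_num]

theorem stmt19 :
    ((∑ s : Fin 2 × Fin 2 × Fin 2,
        ‖((-1 : ℝ) ^ (s.1 : ℕ)) • EuclideanSpace.single (0 : Fin 4) (1 : ℝ) +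
          ((-1 : ℝ) ^ (s.2.1 : ℕ)) • EuclideanSpace.single (1 : Fin 4) (1 : ℝ) +
          ((-1 : ℝ) ^ (s.2.2 : ℕ)) • EuclideanSpace.single (2 : Fin 4) (1 : ℝ) +
          EuclideanSpace.single (3 : Fin 4) (1 : ℝ)‖) = 16) ∧
    (∀ b : Fin 4 → EuclideanSpace ℝ (Fin 4), (∀ j, ‖b j‖ = 1) →
      (∑ s : Fin 2 × Fin 2 × Fin 2,
        ‖((-1 : ℝ) ^ (s.1 : ℕ)) • b 0 + ((-1 : ℝ) ^ (s.2.1 : ℕ)) • b 1 +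
          ((-1 : ℝ) ^ (s.2.2 : ℕ)) • b 2 + b 3‖) ≤ 16) := by
  refine ⟨?_, sum_norm_signedSum_le_sixteen⟩
  calc ∑ s, ‖signedSum (fun j : Fin 4 => EuclideanSpace.single j (1 : ℝ)) s‖
      = ∑ _s : Fin 2 × Fin 2 × Fin 2, (2 : ℝ) :=
        sum_congr rfl fun s _ => norm_signedSum_single_eq_two s
    _ = 16 := by norm_num
end
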